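/- Substitutivity of the type equivalences: if A ~ B and C ~ D, then A[C/X] ~ B[D/X] (this holds both for ~ being ≅ and for ~ being ≃). -/

import Mathlib

namespace LambdaA

/-! ### Type expressions (de Bruijn representation for `μ`-binders) -/

inductive Ty : Type
  | var : ℕ → Ty
  | arrow : Ty → Ty → Ty
  | box : Ty → Ty
  | mu : Ty → Ty
  deriving DecidableEq

namespace Ty

def rename : (ℕ → ℕ) → Ty → Ty
  | f, var n => var (f n)
  | f, arrow A B => arrow (rename f A) (rename f B)
  | f, box A => box (rename f A)
  | f, mu A => mu (rename (fun n => match n with | 0 => 0 | Nat.succ m => f m + 1) A)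

def shiftUp : Ty → Ty := rename Nat.succ

def subst : (ℕ → Ty) → Ty → Ty
  | σ, var n => σ n
  | σ, arrow A B => arrow (subst σ A) (subst σ B)
  | σ, box A => box (subst σ A)
  | σ, mu A => mu (subst (fun n => match n with | 0 => var 0 | Nat.succ m => shiftUp (σ m)) A)

end Ty

/-- `openT A B`: instantiate the outermost bound variable (index `0`) of the body `A` by `B`. -/
def openT (A B : Ty) : Ty :=
  Ty.subst (fun n => match n with | 0 => B | Nat.succ m => Ty.var m) A

/-- `substFree A X B` is the capture-avoiding substitution `A[B/X]` for the free variable `X`. -/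
def substFree (A : Ty) (X : ℕ) (B : Ty) : Ty :=
  Ty.subst (fun n => if n = X then B else Ty.var n) A

/-- The unfolding `μX.A ↦ A[μX.A/X]` of a recursive type. -/
def unfoldMu (A : Ty) : Ty := openT A (Ty.mu A)

/-- Free occurrence of a type variable in a type expression. -/
def freeInTy : ℕ → Ty → Prop
  | X, .var n => n = X
  | X, .arrow A B => freeInTy X A ∨ freeInTy X B
  | X, .box A => freeInTy X A
  | X, .mu A => freeInTy (X + 1) A

/-- Auxiliary ⊤-variant test.  `tvAux A d t` scans the tail of `A`, where `d` is the number of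
`μ`-binders passed so far and `t` is the number of (outermost) such binders inside which a `•`
has already been encountered.  A variable qualifies iff it is bound by one of the `μ`-binders
and at least one `•` occurs inside that binder. -/
def tvAux : Ty → ℕ → ℕ → Bool
  | .var j, d, t => decide (d - t ≤ j ∧ j < d)
  | .box A, d, _ => tvAux A d d
  | .mu A, d, t => tvAux A (d + 1) t
  | .arrow _ B, d, t => tvAux B d t

/-- `A` is a ⊤-variant. -/
def IsTV (A : Ty) : Prop := tvAux A 0 0 = true

/-- `Proper A X` : the type expression `A` is proper in the (free) variable `X`. -/
def Proper : Ty → ℕ → Prop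
  | .var n, X => n ≠ X
  | .box _, _ => True
  | .arrow A B, X => (Proper A X ∧ Proper B X) ∨ IsTV B
  | .mu A, X => Proper A (X + 1) ∨ IsTV (.mu A)

/-- Well-formed type expressions: every recursive type `μX.A` has `A` proper in `X`. -/
def WF : Ty → Prop
  | .var _ => True
  | .arrow A B => WF A ∧ WF B
  | .box A => WF A
  | .mu A => WF A ∧ Proper A 0

/-- `⊤ = μX.•X`. -/
def tyTop : Ty := .mu (.box (.var 0))

/-- `•ⁿ A`. -/
def boxN (n : ℕ) (A : Ty) : Ty := Ty.box^[n] A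

/-- The equivalences `≅` (`s = false`) and `≃` (`s = true`) on type expressions. -/
inductive TyEq : Bool → Ty → Ty → Prop
  | refl (s : Bool) (A : Ty) : TyEq s A A
  | symm {s : Bool} {A B : Ty} : TyEq s A B → TyEq s B A
  | trans {s : Bool} {A B C : Ty} : TyEq s A B → TyEq s B C → TyEq s A C
  | boxCongr {s : Bool} {A B : Ty} : TyEq s A B → TyEq s (.box A) (.box B)
  | arrowCongr {s : Bool} {A B C D : Ty} :
      TyEq s A C → TyEq s B D → TyEq s (.arrow A B) (.arrow C D)
  | arrowTop (s : Bool) (A : Ty) : TyEq s (.arrow A tyTop) tyTop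
  | fix (s : Bool) (A : Ty) : TyEq s (.mu A) (unfoldMu A)
  | uniq {s : Bool} {A C : Ty} : TyEq s A (openT C A) → Proper C 0 → TyEq s A (.mu C)
  | kl (A B : Ty) : TyEq true (.box (.arrow A B)) (.arrow (.box A) (.box B))

/-! ### Subtyping -/

/-- Subtyping assumptions: finite sets of pairs of type variables. -/
abbrev Assum := Finset (ℕ × ℕ)

/-- Well-formedness of a subtyping assumption: every type variable occurs at most once. -/
def AssumOK (γ : Assum) : Prop :=
  (∀ p ∈ γ, (p : ℕ × ℕ).1 ≠ p.2) ∧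
    ∀ p ∈ γ, ∀ q ∈ γ, p ≠ q →
      (p : ℕ × ℕ).1 ≠ (q : ℕ × ℕ).1 ∧ p.1 ≠ q.2 ∧ p.2 ≠ q.1 ∧ p.2 ≠ q.2

/-- `X` occurs in the subtyping assumption `γ`. -/
def AssumVar (γ : Assum) (X : ℕ) : Prop :=
  ∃ p ∈ γ, (p : ℕ × ℕ).1 = X ∨ (p : ℕ × ℕ).2 = X

/-- Derivability of subtyping judgments `γ ⊢ A ⪯ B`. -/
inductive Sub : Assum → Ty → Ty → Prop
  | assump {γ : Assum} {X Y : ℕ} : AssumOK γ → (X, Y) ∈ γ → Sub γ (.var X) (.var Y)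
  | top {γ : Assum} (A : Ty) : AssumOK γ → Sub γ A tyTop
  | refl {γ : Assum} {A B : Ty} : AssumOK γ → TyEq true A B → Sub γ A B
  | trans {γ₁ γ₂ : Assum} {A B C : Ty} :
      Sub γ₁ A B → Sub γ₂ B C → AssumOK (γ₁ ∪ γ₂) → Sub (γ₁ ∪ γ₂) A C
  | boxMono {γ : Assum} {A B : Ty} : Sub γ A B → Sub γ (.box A) (.box B)
  | arrowMono {γ₁ γ₂ : Assum} {A A' B B' : Ty} :
      Sub γ₁ A' A → Sub γ₂ B B' → AssumOK (γ₁ ∪ γ₂) →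
      Sub (γ₁ ∪ γ₂) (.arrow A B) (.arrow A' B')
  | muMono {γ : Assum} {X Y : ℕ} {A B : Ty} :
      AssumOK (insert (X, Y) γ) →
      Sub (insert (X, Y) γ) (openT A (.var X)) (openT B (.var Y)) →
      ¬ AssumVar γ X → ¬ AssumVar γ Y →
      ¬ freeInTy X (openT B (.var Y)) → ¬ freeInTy Y (openT A (.var X)) →
      Proper (openT A (.var X)) X → Proper (openT B (.var Y)) Y →
      Sub γ (.mu A) (.mu B)
  | approx {γ : Assum} (A : Ty) : AssumOK γ → Sub γ A (.box A)

/-! ### Untyped λ-terms (locally-nameless representation) -/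

inductive Tm : Type
  | bvar : ℕ → Tm
  | fvar : ℕ → Tm
  | lam : Tm → Tm
  | app : Tm → Tm → Tm
  deriving DecidableEq

def openTmAux (N : Tm) : ℕ → Tm → Tm
  | _, .fvar y => .fvar y
  | k, .bvar i => if i = k then N else .bvar i
  | k, .lam M => .lam (openTmAux N (k + 1) M)
  | k, .app M₁ M₂ => .app (openTmAux N k M₁) (openTmAux N k M₂)

/-- Instantiate the outermost bound variable of the body `M` by `N`. -/
def openTm (M N : Tm) : Tm := openTmAux N 0 M

/-- `substTm M x N` is the substitution `M[N/x]` for the free variable `x`. -/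
def substTm : Tm → ℕ → Tm → Tm
  | .bvar i, _, _ => .bvar i
  | .fvar y, x, N => if y = x then N else .fvar y
  | .lam M, x, N => .lam (substTm M x N)
  | .app M₁ M₂, x, N => .app (substTm M₁ x N) (substTm M₂ x N)

/-- Free occurrence of an individual variable in a λ-term. -/
def freeTm : ℕ → Tm → Prop
  | _, .bvar _ => False
  | x, .fvar y => y = x
  | x, .lam M => freeTm x M
  | x, .app M₁ M₂ => freeTm x M₁ ∨ freeTm x M₂

/-- One-step β-reduction. -/
inductive Step : Tm → Tm → Prop
  | beta (M N : Tm) : Step (.app (.lam M) N) (openTm M N)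
  | appL {M M' : Tm} (N : Tm) : Step M M' → Step (.app M N) (.app M' N)
  | appR (M : Tm) {N N' : Tm} : Step N N' → Step (.app M N) (.app M N')
  | lamCongr {M M' : Tm} : Step M M' → Step (.lam M) (.lam M')

/-- `→*β`, the reflexive-transitive closure of β-reduction. -/
def Steps : Tm → Tm → Prop := Relation.ReflTransGen Step

/-- β-convertibility `=β`. -/
inductive BetaEq : Tm → Tm → Prop
  | step {M N : Tm} : Step M N → BetaEq M N
  | refl (M : Tm) : BetaEq M M
  | symm {M N : Tm} : BetaEq M N → BetaEq N M
  | trans {M N K : Tm} : BetaEq M N → BetaEq N K → BetaEq M K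

/-! ### Typing -/

/-- Typing contexts: finite sets of (variable, type) pairs. -/
abbrev Ctx := Finset (ℕ × Ty)

/-- Well-formedness of a typing context (functionality). -/
def CtxOK (Γ : Ctx) : Prop :=
  ∀ p ∈ Γ, ∀ q ∈ Γ, (p : ℕ × Ty).1 = (q : ℕ × Ty).1 → p = q

/-- `•Γ`. -/
def boxCtx (Γ : Ctx) : Ctx := Γ.image fun p => (p.1, Ty.box p.2)

/-- All types in the context are well-formed type expressions. -/
def CtxWF (Γ : Ctx) : Prop := ∀ p ∈ Γ, WF (p : ℕ × Ty).2

/-- The typing system λA. -/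
inductive Typing : Ctx → Tm → Ty → Prop
  | var {Γ : Ctx} {x : ℕ} {A : Ty} : CtxOK Γ → (x, A) ∈ Γ → Typing Γ (.fvar x) A
  | shift {Γ : Ctx} {M : Tm} {A : Ty} : Typing (boxCtx Γ) M (.box A) → Typing Γ M A
  | top {Γ : Ctx} (M : Tm) : CtxOK Γ → Typing Γ M tyTop
  | sub {Γ : Ctx} {M : Tm} {A B : Ty} : Typing Γ M A → Sub ∅ A B → Typing Γ M B
  | lamI {Γ : Ctx} {x : ℕ} {A B : Ty} {M : Tm} :
      ¬ freeTm x M →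
      Typing (insert (x, A) Γ) (openTm M (.fvar x)) B →
      Typing Γ (.lam M) (.arrow A B)
  | appE {Γ₁ Γ₂ : Ctx} {M N : Tm} {A B : Ty} :
      Typing Γ₁ M (.arrow A B) → Typing Γ₂ N A → CtxOK (Γ₁ ∪ Γ₂) →
      Typing (Γ₁ ∪ Γ₂) (.app M N) B

/-! ### Frames, λ-algebras and the semantics of types -/

/-- The accessibility relation is conversely well-founded. -/
def ConverselyWF {W : Type*} (acc : W → W → Prop) : Prop :=
  WellFounded fun q p => acc p q

/-- Local linearity of the accessibility relation. -/
def LocallyLinear {W : Type*} (acc : W → W → Prop) : Prop :=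
  ∀ p q, acc p q → ∃ r, Relation.ReflTransGen acc p r ∧ acc r q ∧
    ∀ s, acc r s → Relation.ReflTransGen acc q s

/-- Hereditary type environments. -/
def Hereditary {W : Type*} {V : Type*} (acc : W → W → Prop) (η : ℕ → W → Set V) : Prop :=
  ∀ X p q, acc p q → η X p ⊆ η X q

/-- Syntactical λ-algebras of the untyped λ-calculus. -/
structure LambdaAlgebra (V : Type*) where
  nonempty : Nonempty V
  ap : V → V → V
  den : Tm → (ℕ → V) → V
  den_fvar : ∀ x ρ, den (.fvar x) ρ = ρ x
  den_app : ∀ M N ρ, den (.app M N) ρ = ap (den M ρ) (den N ρ)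
  den_lam : ∀ M x ρ v, ¬ freeTm x M →
    ap (den (.lam M) ρ) v = den (openTm M (.fvar x)) (Function.update ρ x v)
  den_ext : ∀ M ρ ρ', (∀ x, freeTm x M → ρ x = ρ' x) → den M ρ = den M ρ'
  den_beta : ∀ M N ρ, BetaEq M N → den M ρ = den N ρ

/-- The interpretation `I(A)^η_p` of type expressions over a frame, packaged together with
its defining (recursion) equations. -/
structure Interp (W : Type*) (acc : W → W → Prop) (V : Type*) (ap : V → V → V) where
  I : Ty → (ℕ → W → Set V) → W → Set V
  I_tv : ∀ A η p, WF A → IsTV A → I A η p = Set.univ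
  I_var : ∀ X η p, I (.var X) η p = η X p
  I_box : ∀ A η p, WF A → ¬ IsTV (Ty.box A) →
    I (.box A) η p = {u | ∀ q, acc p q → u ∈ I A η q}
  I_arrow : ∀ A B η p, WF A → WF B → ¬ IsTV (Ty.arrow A B) →
    I (.arrow A B) η p =
      {u | ∀ q, Relation.ReflTransGen acc p q → ∀ v ∈ I A η q, ap u v ∈ I B η q}
  I_mu : ∀ A η p, WF (Ty.mu A) → ¬ IsTV (Ty.mu A) →
    I (.mu A) η p = I (unfoldMu A) η p

/-! ### Tail finiteness and related notions -/

/-- The sets `TF^V`. -/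
inductive TFmem : Set ℕ → Ty → Prop
  | var {V : Set ℕ} {X : ℕ} : X ∉ V → TFmem V (.var X)
  | box {V : Set ℕ} {A : Ty} : TFmem V A → TFmem V (.box A)
  | arrow {V : Set ℕ} (A : Ty) {B : Ty} : TFmem V B → TFmem V (.arrow A B)
  | mu {V : Set ℕ} {A : Ty} : WF (.mu A) → TFmem ({0} ∪ (Nat.succ '' V)) A → TFmem V (.mu A)

/-- Shapes `•^{m₀}(B₁ → •^{m₁}(B₂ → ⋯ → •^{m_{n-1}}(Bₙ → •^{mₙ} X)⋯))`. -/
inductive TFShape : Ty → Prop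
  | var (X : ℕ) : TFShape (.var X)
  | box {A : Ty} : TFShape A → TFShape (.box A)
  | arrow (A : Ty) {B : Ty} : TFShape B → TFShape (.arrow A B)

/-- Tail finite type expressions. -/
def TailFinite (A : Ty) : Prop := ∃ C, TFShape C ∧ WF C ∧ TyEq false A C

-- Effectively occurring type variables, positively (`petv`) and negatively (`netv`).
mutual
  def petv : Ty → Finset ℕ
    | .var X => {X}
    | .box A => if tvAux (.box A) 0 0 then ∅ else petv A
    | .arrow A B => if tvAux (.arrow A B) 0 0 then ∅ else netv A ∪ petv B
    | .mu A =>
        if tvAux (.mu A) 0 0 then ∅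
        else if 0 ∈ netv A then ((petv A ∪ netv A).erase 0).image (· - 1)
        else ((petv A).erase 0).image (· - 1)
  def netv : Ty → Finset ℕ
    | .var _ => ∅
    | .box A => if tvAux (.box A) 0 0 then ∅ else netv A
    | .arrow A B => if tvAux (.arrow A B) 0 0 then ∅ else petv A ∪ netv B
    | .mu A =>
        if tvAux (.mu A) 0 0 then ∅
        else if 0 ∈ netv A then ((netv A ∪ petv A).erase 0).image (· - 1)
        else ((netv A).erase 0).image (· - 1)
end

/-- Positively finite type expressions. -/
def PosFin (A : Ty) : Prop :=
  ∀ (s : Bool) (B C : Ty) (X : ℕ), WF B → WF C →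
    TyEq s A (substFree B X C) → X ∈ petv B → X ∉ netv B → TailFinite C

/-- Negatively finite type expressions. -/
def NegFin (A : Ty) : Prop :=
  ∀ (s : Bool) (B C : Ty) (X : ℕ), WF B → WF C →
    TyEq s A (substFree B X C) → X ∈ netv B → X ∉ petv B → TailFinite C

/-! ### Head normal forms, maximality, normal forms -/

/-- `y N₁ … Nₙ` with every argument satisfying `P`. -/
inductive SpineArgs (P : Tm → Prop) : Tm → Prop
  | fvar (x : ℕ) : SpineArgs P (.fvar x)
  | bvar (i : ℕ) : SpineArgs P (.bvar i)
  | app {M N : Tm} : SpineArgs P M → P N → SpineArgs P (.app M N)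

/-- Head normal forms `λx₁…λxₘ. y N₁ … Nₙ` whose arguments satisfy `P`. -/
inductive HNFP (P : Tm → Prop) : Tm → Prop
  | spine {M : Tm} : SpineArgs P M → HNFP P M
  | lam {M : Tm} : HNFP P M → HNFP P (.lam M)

/-- Head normal forms. -/
def HNF : Tm → Prop := HNFP fun _ => True

/-- Maximality at a given depth. -/
def MaxAt : ℕ → Tm → Prop
  | 0, _ => True
  | n + 1, M => ∃ M', Steps M M' ∧ HNFP (MaxAt n) M'

/-- Maximal λ-terms: the Böhm tree contains no `⊥`. -/
def Maximal (M : Tm) : Prop := ∀ n, MaxAt n M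

/-- β-normal forms. -/
def NormalForm (M : Tm) : Prop := ∀ N, ¬ Step M N

/-- Type expressions without any occurrence of the modal operator `•`. -/
def NoBox : Ty → Prop
  | .var _ => True
  | .arrow A B => NoBox A ∧ NoBox B
  | .box _ => False
  | .mu A => NoBox A

/-! ### The modal logic LAμ and its Kripke semantics -/

/-- The logic LAμ (formulae are type expressions). -/
inductive LAmu : Finset Ty → Ty → Prop
  | assump {Γ : Finset Ty} {A : Ty} : LAmu (insert A Γ) A
  | nec {Γ₁ : Finset Ty} (Γ₂ : Finset Ty) {A : Ty} :
      LAmu Γ₁ A → LAmu (Γ₁.image Ty.box ∪ Γ₂) (.box A)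
  | four {Γ : Finset Ty} {A : Ty} : LAmu Γ (.box A) → LAmu Γ (.box (.box A))
  | impI {Γ : Finset Ty} {A B : Ty} : LAmu (insert A Γ) B → LAmu Γ (.arrow A B)
  | impE {Γ₁ Γ₂ : Finset Ty} {A B : Ty} :
      LAmu Γ₁ (.arrow A B) → LAmu Γ₂ A → LAmu (Γ₁ ∪ Γ₂) B
  | fold {Γ : Finset Ty} {A : Ty} : LAmu Γ (unfoldMu A) → LAmu Γ (.mu A)
  | unfold {Γ : Finset Ty} {A : Ty} : LAmu Γ (.mu A) → LAmu Γ (unfoldMu A)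
  | lrule {Γ : Finset Ty} {A B : Ty} :
      LAmu Γ (.arrow (.box A) (.box B)) → LAmu Γ (.box (.arrow A B))
  | approx {Γ : Finset Ty} {A : Ty} : LAmu Γ A → LAmu Γ (.box A)

/-- The Kripke satisfaction relation over an LA-frame `(W, tri, R)` under a valuation `ξ`,
packaged with its defining (recursion) equations. -/
structure SatFun {W : Type*} (tri R : W → W → Prop) (ξ : ℕ → W → Prop) where
  sat : Ty → W → Prop
  sat_tv : ∀ A p, WF A → IsTV A → sat A p
  sat_var : ∀ X p, sat (.var X) p ↔ ξ X p
  sat_box : ∀ A p, WF A → ¬ IsTV (Ty.box A) →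
    (sat (.box A) p ↔ ∀ q, tri p q → sat A q)
  sat_arrow : ∀ A B p, WF A → WF B → ¬ IsTV (Ty.arrow A B) →
    (sat (.arrow A B) p ↔ ∀ q, R p q → sat A q → sat B q)
  sat_mu : ∀ A p, WF (Ty.mu A) → ¬ IsTV (Ty.mu A) →
    (sat (.mu A) p ↔ sat (unfoldMu A) p)

/-!
Substituting along a derivation of `A ~ B` stays a derivation, since every rule is stable under
substitution (properness and ⊤-variants are preserved by substitutions fixing the bound variable).
Replacing `C` by `D` inside `B` is a congruence by induction on `B`; at `μX.B'` the unfolding of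
`μX.B'[C/Y]` is, by induction, equivalent to `B'[μX.B'[C/Y]/X][D/Y]`, so uniqueness of fixed points
(which needs `B'` proper in `X`) identifies it with `μX.B'[D/Y]`.
-/

namespace Ty

def upRen (f : ℕ → ℕ) : ℕ → ℕ
  | 0 => 0
  | m + 1 => f m + 1

def upSubst (σ : ℕ → Ty) : ℕ → Ty
  | 0 => var 0
  | m + 1 => shiftUp (σ m)

def scons (B : Ty) (σ : ℕ → Ty) : ℕ → Ty
  | 0 => B
  | m + 1 => σ m

lemma rename_mu (f : ℕ → ℕ) (A : Ty) : rename f (mu A) = mu (rename (upRen f) A) := rfl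

lemma subst_mu (σ : ℕ → Ty) (A : Ty) : subst σ (mu A) = mu (subst (upSubst σ) A) := rfl

lemma rename_rename (A : Ty) : ∀ f g : ℕ → ℕ, rename f (rename g A) = rename (f ∘ g) A := by
  induction A with
  | var n => exact fun _ _ => rfl
  | arrow A B ihA ihB => exact fun f g => by simp only [rename, ihA, ihB]
  | box A ih => exact fun f g => by simp only [rename, ih]
  | mu A ih =>
    intro f g
    simp only [rename_mu, ih]
    congr 2
    funext n
    cases n <;> rfl

lemma subst_rename (A : Ty) :
    ∀ (σ : ℕ → Ty) (f : ℕ → ℕ), subst σ (rename f A) = subst (σ ∘ f) A := by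
  induction A with
  | var n => exact fun _ _ => rfl
  | arrow A B ihA ihB => exact fun σ f => by simp only [rename, subst, ihA, ihB]
  | box A ih => exact fun σ f => by simp only [rename, subst, ih]
  | mu A ih =>
    intro σ f
    simp only [rename_mu, subst_mu, ih]
    congr 2
    funext n
    cases n <;> rfl

lemma rename_subst (A : Ty) :
    ∀ (f : ℕ → ℕ) (σ : ℕ → Ty), rename f (subst σ A) = subst (rename f ∘ σ) A := by
  induction A with
  | var n => exact fun _ _ => rfl
  | arrow A B ihA ihB => exact fun f σ => by simp only [rename, subst, ihA, ihB]
  | box A ih => exact fun f σ => by simp only [rename, subst, ih]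
  | mu A ih =>
    intro f σ
    simp only [rename_mu, subst_mu, ih]
    congr 2
    funext n
    cases n with
    | zero => rfl
    | succ m => simp only [Function.comp, upSubst, shiftUp, rename_rename]; rfl

lemma subst_subst (A : Ty) :
    ∀ σ τ : ℕ → Ty, subst σ (subst τ A) = subst (subst σ ∘ τ) A := by
  induction A with
  | var n => exact fun _ _ => rfl
  | arrow A B ihA ihB => exact fun σ τ => by simp only [subst, ihA, ihB]
  | box A ih => exact fun σ τ => by simp only [subst, ih]
  | mu A ih =>
    intro σ τ
    simp only [subst_mu, ih]
    congr 2
    funext n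
    cases n with
    | zero => rfl
    | succ m => simp only [Function.comp, upSubst, shiftUp, subst_rename, rename_subst]; rfl

lemma subst_var (A : Ty) : subst var A = A := by
  induction A with
  | var n => rfl
  | arrow A B ihA ihB => simp only [subst, ihA, ihB]
  | box A ih => simp only [subst, ih]
  | mu A ih =>
    have hup : upSubst var = var := by
      funext n
      cases n <;> rfl
    rw [subst_mu, hup, ih]

lemma subst_scons_shiftUp (P : Ty) (σ : ℕ → Ty) (A : Ty) :
    subst (scons P σ) (shiftUp A) = subst σ A := by
  rw [shiftUp, subst_rename]
  rfl

end Ty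

open Ty

lemma openT_eq_subst (A P : Ty) : openT A P = subst (scons P var) A := rfl

lemma openT_subst_upSubst (σ : ℕ → Ty) (A P : Ty) :
    openT (subst (upSubst σ) A) P = subst (scons P σ) A := by
  rw [openT_eq_subst, subst_subst]
  congr 1
  funext n
  cases n with
  | zero => rfl
  | succ m => exact (subst_scons_shiftUp P var (σ m)).trans (subst_var (σ m))

lemma subst_openT (σ : ℕ → Ty) (A B : Ty) :
    subst σ (openT A B) = openT (subst (upSubst σ) A) (subst σ B) := by
  rw [openT_subst_upSubst, openT_eq_subst, subst_subst]
  congr 1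
  funext n
  cases n <;> rfl

lemma subst_unfoldMu (σ : ℕ → Ty) (A : Ty) :
    subst σ (unfoldMu A) = unfoldMu (subst (upSubst σ) A) := by
  rw [unfoldMu, subst_openT, subst_mu, unfoldMu]

lemma tvAux_subst (A : Ty) : ∀ (σ : ℕ → Ty) (d t : ℕ), (∀ j < d, σ j = var j) →
    tvAux A d t = true → tvAux (subst σ A) d t = true := by
  induction A with
  | var j =>
    intro σ d t hσ h
    have hj : d - t ≤ j ∧ j < d := by simpa [tvAux] using h
    rw [subst, hσ j hj.2]
    exact h
  | arrow A B _ ihB => exact fun σ d t hσ h => ihB σ d t hσ h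
  | box A ih => exact fun σ d _ hσ h => ih σ d d hσ h
  | mu A ih =>
    intro σ d t hσ h
    refine ih (upSubst σ) (d + 1) t (fun j hj => ?_) h
    cases j with
    | zero => rfl
    | succ m => rw [upSubst, hσ m (by omega)]; rfl

lemma IsTV.subst {A : Ty} (σ : ℕ → Ty) (h : IsTV A) : IsTV (Ty.subst σ A) :=
  tvAux_subst A σ 0 0 (fun _ hj => absurd hj (Nat.not_lt_zero _)) h

lemma not_freeInTy_rename (A : Ty) : ∀ (f : ℕ → ℕ) (X : ℕ),
    (∀ n, freeInTy n A → f n ≠ X) → ¬ freeInTy X (rename f A) := by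
  induction A with
  | var n => exact fun f X h => h n rfl
  | arrow A B ihA ihB =>
    rintro f X h (hA | hB)
    · exact ihA f X (fun n hn => h n (Or.inl hn)) hA
    · exact ihB f X (fun n hn => h n (Or.inr hn)) hB
  | box A ih => exact ih
  | mu A ih =>
    intro f X h
    refine ih (upRen f) (X + 1) (fun n hn => ?_)
    cases n with
    | zero => exact (Nat.succ_ne_zero X).symm
    | succ m => exact fun hm => h m hn (Nat.succ_injective hm)

lemma proper_of_not_freeInTy (A : Ty) : ∀ X : ℕ, ¬ freeInTy X A → Proper A X := by
  induction A with
  | var n => exact fun X h => h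
  | arrow A B ihA ihB =>
    exact fun X h => Or.inl ⟨ihA X (fun hA => h (Or.inl hA)), ihB X (fun hB => h (Or.inr hB))⟩
  | box A => exact fun _ _ => trivial
  | mu A ih => exact fun X h => Or.inl (ih (X + 1) h)

lemma Proper.subst {A : Ty} {X : ℕ} {σ : ℕ → Ty} (hA : Proper A X) (hX : σ X = var X)
    (hσ : ∀ n ≠ X, ¬ freeInTy X (σ n)) : Proper (Ty.subst σ A) X := by
  induction A generalizing X σ with
  | var n => exact proper_of_not_freeInTy (σ n) X (hσ n hA)
  | arrow A B ihA ihB =>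
    rcases hA with ⟨hA, hB⟩ | hTV
    · exact Or.inl ⟨ihA hA hX hσ, ihB hB hX hσ⟩
    · exact Or.inr (hTV.subst σ)
  | box A => trivial
  | mu A ih =>
    rcases hA with hA | hTV
    · refine Or.inl (ih hA (show shiftUp (σ X) = _ by rw [hX]; rfl) fun n hn => ?_)
      cases n with
      | zero => exact fun h0 => Nat.succ_ne_zero X h0.symm
      | succ m =>
        refine not_freeInTy_rename (σ m) Nat.succ (X + 1) fun k hk hkX => ?_
        exact hσ m (fun hm => hn (by rw [hm])) (Nat.succ_injective hkX ▸ hk)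
    · exact Or.inr (hTV.subst σ)

lemma Proper.subst_upSubst {C : Ty} (σ : ℕ → Ty) (h : Proper C 0) :
    Proper (Ty.subst (upSubst σ) C) 0 := by
  refine h.subst rfl fun n hn => ?_
  cases n with
  | zero => exact absurd rfl hn
  | succ m => exact not_freeInTy_rename (σ m) Nat.succ 0 fun k _ => Nat.succ_ne_zero k

lemma TyEq.subst {s : Bool} {A B : Ty} (σ : ℕ → Ty) (h : TyEq s A B) :
    TyEq s (Ty.subst σ A) (Ty.subst σ B) := by
  induction h generalizing σ with
  | refl s A => exact .refl s _
  | symm _ ih => exact (ih σ).symm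
  | trans _ _ ih₁ ih₂ => exact (ih₁ σ).trans (ih₂ σ)
  | boxCongr _ ih => exact (ih σ).boxCongr
  | arrowCongr _ _ ih₁ ih₂ => exact (ih₁ σ).arrowCongr (ih₂ σ)
  | arrowTop s A => exact .arrowTop s _
  | fix s A => exact (subst_unfoldMu σ A).symm ▸ .fix s _
  | uniq _ hC ih => exact .uniq (subst_openT σ _ _ ▸ ih σ) (hC.subst_upSubst σ)
  | kl A B => exact .kl _ _

lemma TyEq.subst_congr {s : Bool} {A : Ty} (hA : WF A) :
    ∀ {σ τ : ℕ → Ty}, (∀ n, TyEq s (σ n) (τ n)) → TyEq s (Ty.subst σ A) (Ty.subst τ A) := by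
  induction A with
  | var n => exact fun h => h n
  | arrow A B ihA ihB => exact fun h => (ihA hA.1 h).arrowCongr (ihB hA.2 h)
  | box A ih => exact fun h => (ih hA h).boxCongr
  | mu B ih =>
    intro σ τ h
    set P := mu (Ty.subst (upSubst σ) B)
    have hP : TyEq s P (openT (Ty.subst (upSubst τ) B) P) := by
      have hστ : TyEq s (Ty.subst (scons P σ) B) (Ty.subst (scons P τ) B) :=
        ih hA.1 fun n => by cases n <;> [exact .refl s P; exact h _]
      rw [openT_subst_upSubst]
      exact (TyEq.fix s _).trans (by rw [unfoldMu, openT_subst_upSubst]; exact hστ)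
    exact .uniq hP (hA.2.subst_upSubst τ)

/-- **Substitutivity** of the type equivalences: if `A ~ B` and `C ~ D` then
`A[C/X] ~ B[D/X]` (both for `≅` and `≃`). -/
theorem statement13 (s : Bool) (A B C D : Ty) (X : ℕ)
    (hA : WF A) (hB : WF B) (hC : WF C) (hD : WF D)
    (hAB : TyEq s A B) (hCD : TyEq s C D) :
    TyEq s (substFree A X C) (substFree B X D) := by
  refine (hAB.subst _).trans (TyEq.subst_congr hB fun n => ?_)
  split_ifs
  · exact hCD
  · exact .refl s _

end LambdaA
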